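/- Let 𝔪 = 𝔪₋₁ ⊕ 𝔪₋₂ be a step 2 fundamental graded Lie algebra over ℝ with dim 𝔪₋₂ ≤ 3 and 𝔪₋₁ ∩ Z(𝔪) = 0. If 𝔪 is NOT ad-surjective, then dim 𝔪₋₁ = 3, dim 𝔪₋₂ = 3, and the Lie bracket induces a linear isomorphism from the second exterior power Λ²(𝔪₋₁) onto 𝔪₋₂; that is, 𝔪 is (isomorphic to) the truncated step 2 free nilpotent Lie algebra with 3 generators. -/

import Mathlib

/-!
Write `B x y = ⁅x, y⁆` for the bracket `𝔪₋₁ × 𝔪₋₁ → 𝔪₋₂`. Since no `ad x` is onto and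
`dim 𝔪₋₂ ≤ 3`, every `ad x` has rank at most `2`. The key fact is a pencil argument: if `ad x` has
maximal rank and `B x z = 0`, then `B y z ∈ im (ad x)` for every `y`, for otherwise `ad (x + t y)`
would have larger rank for all but finitely many `t`. Pick `x` of maximal rank and `y, z` with
`B y z ∉ im (ad x)` (the brackets span `𝔪₋₂`). The pencil argument makes `B y z, B x y, B x z` a
basis of `𝔪₋₂`, in which the images of `ad x`, `ad y`, `ad z` are coordinate planes; applying it
to `x`, `y` and `z` and using `𝔪₋₁ ∩ Z(𝔪) = 0` shows `ker (ad x) = ℝ x`. Hence `dim 𝔪₋₁ = 3`,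
and the bracket induces a surjection `Λ²𝔪₋₁ → 𝔪₋₂` between spaces of dimension `3`.
-/

/-- A *step 2 fundamental graded Lie algebra* structure on a real Lie algebra `L`:
a direct sum decomposition `L = m1 ⊕ m2` with `⁅m1, m1⁆ = m2`, `⁅m1, m2⁆ = 0` and
`⁅m2, m2⁆ = 0`. -/
structure IsStep2FGLA (L : Type*) [LieRing L] [LieAlgebra ℝ L]
    (m1 m2 : Submodule ℝ L) : Prop where
  compl : IsCompl m1 m2
  span_brackets : m2 = Submodule.span ℝ {z : L | ∃ x ∈ m1, ∃ y ∈ m1, ⁅x, y⁆ = z}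
  bracket_m1_m2 : ∀ x ∈ m1, ∀ y ∈ m2, ⁅x, y⁆ = 0
  bracket_m2_m2 : ∀ x ∈ m2, ∀ y ∈ m2, ⁅x, y⁆ = 0

open Module LinearMap Submodule

namespace LinearMap

variable {K V W D : Type*} [Field K] [AddCommGroup V] [Module K V] [AddCommGroup W] [Module K W]
  [AddCommGroup D] [Module K D]

theorem exists_ne_zero_injective_add_smul [Infinite K] [FiniteDimensional K D]
    {φ : D →ₗ[K] W} (ψ : D →ₗ[K] W) (hφ : Function.Injective φ) :
    ∃ t : K, t ≠ 0 ∧ Function.Injective (φ + t • ψ) := by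
  -- With a left inverse `φinv`, a kernel vector of `φ + t • ψ` is an eigenvector of `φinv ∘ₗ ψ`
  -- for the eigenvalue `-t⁻¹`, and there are finitely many eigenvalues.
  obtain ⟨φinv, hφinv⟩ := φ.exists_leftInverse_of_injective (ker_eq_bot.2 hφ)
  set M : Module.End K D := φinv ∘ₗ ψ
  obtain ⟨t, ht⟩ := ((M.finite_hasEigenvalue.image fun μ => -μ⁻¹).insert 0).exists_notMem
  simp only [Set.mem_insert_iff, Set.mem_image, Set.mem_ofPred_eq, not_or, not_exists,
    not_and] at ht
  refine ⟨t, ht.1, ker_eq_bot.1 (eq_bot_iff.2 fun v hv => ?_)⟩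
  by_contra hv0
  have hv' : v + t • M v = 0 := by
    have := congr_arg φinv (mem_ker.1 hv)
    rwa [add_apply, smul_apply, map_add, map_smul, map_zero, ← comp_apply φinv φ, hφinv,
      id_apply] at this
  have hMv : M v = (-t⁻¹) • v := by
    rw [← inv_smul_smul₀ ht.1 (M v), eq_neg_of_add_eq_zero_right hv', smul_neg, neg_smul]
  exact ht.2 (-t⁻¹) (Module.End.hasEigenvalue_of_hasEigenvector
    ⟨Module.End.mem_eigenspace_iff.2 hMv, hv0⟩) (by simp)

theorem apply_mem_range_of_forall_finrank_range_add_smul_le [Infinite K] [FiniteDimensional K W]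
    {f : V →ₗ[K] W} (g : V →ₗ[K] W)
    (hf : ∀ t : K, finrank K (range (f + t • g)) ≤ finrank K (range f))
    {z : V} (hz : f z = 0) : g z ∈ range f := by
  -- If `g z ∉ range f`, then `(w, c) ↦ w + c • g z` is injective on `range f × K`, and a generic
  -- perturbation of it stays injective with range inside `range (f + t • g)`.
  by_contra hgz
  obtain ⟨s, hs⟩ := f.rangeRestrict.exists_rightInverse_of_surjective f.range_rangeRestrict
  have hfs : ∀ w, f (s w) = w := fun w => congr_arg Subtype.val (LinearMap.congr_fun hs w)
  set φ : range f × K →ₗ[K] W := (range f).subtype.coprod (toSpanSingleton K W (g z))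
  have hφ : Function.Injective φ := by
    refine ker_eq_bot.1 (eq_bot_iff.2 fun ⟨w, c⟩ hwc => ?_)
    have hwc : (w : W) + c • g z = 0 := by simpa [φ] using hwc
    by_cases hc : c = 0
    · subst hc
      simp_all
    · refine absurd ?_ hgz
      rw [← inv_smul_smul₀ hc (g z), eq_neg_of_add_eq_zero_right hwc, smul_neg]
      exact neg_mem (smul_mem _ _ w.2)
  obtain ⟨t, ht, hinj⟩ := exists_ne_zero_injective_add_smul ((g ∘ₗ s).coprod 0) hφ
  have hle : range (φ + t • (g ∘ₗ s).coprod 0) ≤ range (f + t • g) := by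
    rintro _ ⟨⟨w, c⟩, rfl⟩
    refine ⟨s w + (c / t) • z, ?_⟩
    simp only [add_apply, map_add, hfs, map_smul, hz, add_zero, smul_apply, smul_smul,
      div_mul_cancel₀ _ ht, coprod_apply, subtype_apply, toSpanSingleton_apply, coe_comp,
      Function.comp_apply, zero_apply, zero_add, φ]
    abel
  have hD := finrank_range_of_inj hinj
  rw [finrank_prod, finrank_self] at hD
  have := (finrank_mono hle).trans (hf t)
  omega

end LinearMap

namespace Module.Basis

variable {K W ι : Type*} [Field K] [AddCommGroup W] [Module K W] (b : Basis ι K W)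

theorem finrank_span_pair {j k : ι} (hjk : j ≠ k) : finrank K (span K {b j, b k}) = 2 := by
  have hli := b.linearIndependent.comp ![j, k] fun m n => by
    fin_cases m <;> fin_cases n <;> simp [hjk, hjk.symm]
  have := finrank_span_eq_card hli
  rwa [Set.range_comp, Matrix.range_cons_cons_empty, Set.image_pair, Fintype.card_fin] at this

theorem eq_span_pair_of_finrank_le_two [FiniteDimensional K W] {S : Submodule K W}
    (hS : finrank K S ≤ 2) {j k : ι} (hjk : j ≠ k) (hj : b j ∈ S) (hk : b k ∈ S) :
    S = span K {b j, b k} :=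
  (eq_of_le_of_finrank_le (span_le.2 (Set.pair_subset hj hk))
    (hS.trans (b.finrank_span_pair hjk).ge)).symm

theorem two_le_finrank_of_mem [FiniteDimensional K W] {S : Submodule K W} {j k : ι}
    (hjk : j ≠ k) (hj : b j ∈ S) (hk : b k ∈ S) : 2 ≤ finrank K S :=
  (b.finrank_span_pair hjk).ge.trans (finrank_mono (span_le.2 (Set.pair_subset hj hk)))

theorem repr_apply_eq_zero_of_mem_span_pair {i j k : ι} (hij : i ≠ j) (hik : i ≠ k) {w : W}
    (hw : w ∈ span K {b j, b k}) : b.repr w i = 0 := by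
  obtain ⟨s, t, rfl⟩ := mem_span_pair.1 hw
  simp [hij.symm, hik.symm]

theorem repr_apply_eq_zero_of_finrank_le_two [FiniteDimensional K W] {S : Submodule K W}
    (hS : finrank K S ≤ 2) {i j k : ι} (hij : i ≠ j) (hik : i ≠ k) (hjk : j ≠ k) (hj : b j ∈ S)
    (hk : b k ∈ S) {w : W} (hw : w ∈ S) : b.repr w i = 0 :=
  b.repr_apply_eq_zero_of_mem_span_pair hij hik
    (b.eq_span_pair_of_finrank_le_two hS hjk hj hk ▸ hw)

end Module.Basis

namespace LinearMap

variable {R V W : Type*} [CommRing R] [AddCommGroup V] [Module R V] [AddCommGroup W] [Module R W]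
  {B : V →ₗ[R] V →ₗ[R] W}

def IsAlt.toAlternatingMap (hB : B.IsAlt) : V [⋀^Fin 2]→ₗ[R] W where
  toFun v := B (v 0) (v 1)
  map_update_add' v i x y := by fin_cases i <;> simp
  map_update_smul' v i c x := by fin_cases i <;> simp
  map_eq_zero_of_eq' v i j hv hij := by
    fin_cases i <;> fin_cases j <;> simp_all [hB.self_eq_zero]

theorem IsAlt.toAlternatingMap_apply (hB : B.IsAlt) (v : Fin 2 → V) :
    hB.toAlternatingMap v = B (v 0) (v 1) :=
  rfl

end LinearMap

namespace LinearMap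

variable {K V W : Type*} [Field K] [AddCommGroup V] [Module K V] [AddCommGroup W] [Module K W]
  {B : V →ₗ[K] V →ₗ[K] W}

theorem apply_apply_mem_range_of_forall_finrank_le [Infinite K] [FiniteDimensional K W]
    {x z : V} (hx : ∀ y, finrank K (range (B y)) ≤ finrank K (range (B x))) (hz : B x z = 0)
    (y : V) : B y z ∈ range (B x) :=
  apply_mem_range_of_forall_finrank_range_add_smul_le (B y)
    (fun t => by rw [← map_smul, ← map_add]; exact hx (x + t • y)) hz

theorem IsAlt.linearIndependent_of_forall_finrank_le [Infinite K] [FiniteDimensional K W]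
    (hB : B.IsAlt) {x y z : V} (hx : ∀ y, finrank K (range (B y)) ≤ finrank K (range (B x)))
    (hyz : B y z ∉ range (B x)) : LinearIndependent K ![B y z, B x y, B x z] := by
  refine linearIndependent_finCons.2 ⟨LinearIndependent.pair_iff.2 fun s t hst => ?_, ?_⟩
  · have hker : B x (s • y + t • z) = 0 := by simpa using hst
    have hy := apply_apply_mem_range_of_forall_finrank_le hx hker y
    have hz := apply_apply_mem_range_of_forall_finrank_le hx hker z
    simp only [map_add, map_smul, hB.self_eq_zero, smul_zero, zero_add,
      add_zero, ← hB.neg y z, smul_neg, neg_mem_iff] at hy hz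
    constructor <;> by_contra hc
    · exact hyz ((smul_mem_iff _ hc).1 hz)
    · exact hyz ((smul_mem_iff _ hc).1 hy)
  · rw [Matrix.range_cons_cons_empty]
    exact fun h => hyz (span_le.2 (Set.pair_subset (mem_range_self _ y) (mem_range_self _ z)) h)

theorem repr_apply_eq_zero_of_apply_eq_zero [Infinite K] [FiniteDimensional K W]
    {ι : Type*} (hrank : ∀ v, finrank K (range (B v)) ≤ 2) (b : Basis ι K W) {u : V} {i j k : ι}
    (hij : i ≠ j) (hik : i ≠ k) (hjk : j ≠ k) (hj : b j ∈ range (B u)) (hk : b k ∈ range (B u))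
    {z : V} (hz : B u z = 0) (y : V) : b.repr (B y z) i = 0 := by
  have hu : ∀ v, finrank K (range (B v)) ≤ finrank K (range (B u)) := fun v =>
    (hrank v).trans (b.two_le_finrank_of_mem hjk hj hk)
  exact b.repr_apply_eq_zero_of_finrank_le_two (hrank u) hij hik hjk hj hk
    (apply_apply_mem_range_of_forall_finrank_le hu hz y)

theorem IsAlt.apply_mem_range_flip (hB : B.IsAlt) (u v : V) : B v u ∈ range (B u) :=
  ⟨-v, by rw [map_neg, hB.neg]⟩

section Frame

variable [Infinite K] [FiniteDimensional K W] {x y z : V} {b : Basis (Fin 3) K W}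

theorem IsAlt.eq_zero_of_apply_eq_zero_of_apply_eq_zero (hB : B.IsAlt) (hsep : B.SeparatingLeft)
    (hrank : ∀ v, finrank K (range (B v)) ≤ 2) (hb : ⇑b = ![B y z, B x y, B x z]) {w : V}
    (hxw : B x w = 0) (hyw : B y w = 0) : w = 0 := by
  -- Coordinate `0` vanishes on `range (B x)`, `2` on `range (B y)` and `1` on `range (B z)`.
  have hb0 : b 0 = B y z := congr_fun hb 0
  have hb1 : b 1 = B x y := congr_fun hb 1
  have hb2 : b 2 = B x z := congr_fun hb 2
  have hz0 : b 0 ∈ range (B z) := hb0 ▸ hB.apply_mem_range_flip z y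
  have hz2 : b 2 ∈ range (B z) := hb2 ▸ hB.apply_mem_range_flip z x
  have h0 : ∀ v, b.repr (B v w) 0 = 0 := repr_apply_eq_zero_of_apply_eq_zero hrank b
    (by decide) (by decide) (by decide) (hb1 ▸ mem_range_self _ y) (hb2 ▸ mem_range_self _ z) hxw
  have h2 : ∀ v, b.repr (B v w) 2 = 0 := repr_apply_eq_zero_of_apply_eq_zero hrank b
    (by decide) (by decide) (by decide) (hb0 ▸ mem_range_self _ z)
    (hb1 ▸ hB.apply_mem_range_flip y x) hyw
  have hzw : B z w = 0 := b.ext_elem fun i => by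
    rw [map_zero, Finsupp.zero_apply]
    fin_cases i
    · exact h0 z
    · exact b.repr_apply_eq_zero_of_finrank_le_two (hrank z) (i := 1) (by decide) (by decide)
        (by decide) hz0 hz2 (mem_range_self _ w)
    · exact h2 z
  have h1 : ∀ v, b.repr (B v w) 1 = 0 :=
    repr_apply_eq_zero_of_apply_eq_zero hrank b (by decide) (by decide) (by decide) hz0 hz2 hzw
  refine hsep w fun v => ?_
  rw [← hB.neg, neg_eq_zero]
  exact b.ext_elem fun i => by fin_cases i <;> simp [h0, h1, h2]

theorem IsAlt.ker_eq_span_singleton (hB : B.IsAlt) (hsep : B.SeparatingLeft)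
    (hrank : ∀ v, finrank K (range (B v)) ≤ 2) (hb : ⇑b = ![B y z, B x y, B x z]) :
    ker (B x) = K ∙ x := by
  refine le_antisymm (fun w hw => ?_) ((span_singleton_le_iff_mem _ _).2 (hB.self_eq_zero x))
  have hb0 : b 0 = B y z := congr_fun hb 0
  have hb1 : b 1 = B x y := congr_fun hb 1
  have hb2 : b 2 = B x z := congr_fun hb 2
  have h0 : b.repr (B y w) 0 = 0 := repr_apply_eq_zero_of_apply_eq_zero hrank b
    (by decide) (by decide) (by decide) (hb1 ▸ mem_range_self _ y) (hb2 ▸ mem_range_self _ z) hw y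
  have h2 : b.repr (B y w) 2 = 0 := b.repr_apply_eq_zero_of_finrank_le_two (hrank y) (by decide)
    (by decide) (by decide) (hb0 ▸ mem_range_self _ z) (hb1 ▸ hB.apply_mem_range_flip y x)
    (mem_range_self _ w)
  set c := b.repr (B y w) 1
  have hyw : B y w = c • B x y := by
    rw [← hb1, ← b.sum_repr (B y w), Fin.sum_univ_three, h0, h2, zero_smul, zero_smul, zero_add,
      add_zero]
  have hwx : w + c • x = 0 := hB.eq_zero_of_apply_eq_zero_of_apply_eq_zero hsep hrank hb
    (by simp [mem_ker.1 hw, hB.self_eq_zero]) (by simp [hyw, ← hB.neg x y])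
  exact mem_span_singleton.2 ⟨-c, by rw [neg_smul, ← eq_neg_of_add_eq_zero_left hwx]⟩

end Frame

theorem IsAlt.exists_exteriorPower_two_equiv [FiniteDimensional K V] [FiniteDimensional K W]
    (hB : B.IsAlt) (hspan : span K {w | ∃ x y, B x y = w} = ⊤)
    (hW : finrank K W = (finrank K V).choose 2) :
    ∃ e : ⋀[K]^2 V ≃ₗ[K] W, ∀ x y, e (exteriorPower.ιMulti K 2 ![x, y]) = B x y := by
  set φ := exteriorPower.alternatingMapLinearEquiv hB.toAlternatingMap
  have hφ : ∀ x y, φ (exteriorPower.ιMulti K 2 ![x, y]) = B x y := fun x y => by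
    simp [φ, hB.toAlternatingMap_apply]
  have hsurj : Function.Surjective φ := by
    refine range_eq_top.1 (eq_top_iff.2 (hspan ▸ span_le.2 ?_))
    rintro _ ⟨x, y, rfl⟩
    exact ⟨_, hφ x y⟩
  have hinj : Function.Injective φ :=
    (injective_iff_surjective_of_finrank_eq_finrank (by rw [exteriorPower.finrank_eq, hW])).2 hsurj
  exact ⟨.ofBijective φ ⟨hinj, hsurj⟩, hφ⟩

theorem IsAlt.finrank_eq_three_of_forall_range_ne_top [Infinite K] [FiniteDimensional K V]
    [FiniteDimensional K W] (hB : B.IsAlt) (hsep : B.SeparatingLeft)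
    (hspan : span K {w | ∃ x y, B x y = w} = ⊤) (hW : finrank K W ≤ 3)
    (hB_ne_top : ∀ x, range (B x) ≠ ⊤) : finrank K V = 3 ∧ finrank K W = 3 := by
  have hrank : ∀ u, finrank K (range (B u)) ≤ 2 := fun u => by
    have := Submodule.finrank_lt (hB_ne_top u)
    omega
  have hbdd : BddAbove (Set.range fun u => finrank K (range (B u))) :=
    ⟨2, by rintro _ ⟨u, rfl⟩; exact hrank u⟩
  obtain ⟨_, ⟨x, rfl⟩, hx⟩ := hbdd.exists_isGreatest_of_nonempty (Set.range_nonempty _)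
  obtain ⟨y, z, hyz⟩ : ∃ y z, B y z ∉ range (B x) := by
    by_contra! h
    exact hB_ne_top x (eq_top_iff.2 (hspan ▸ span_le.2 (by rintro _ ⟨y, z, rfl⟩; exact h y z)))
  have hli := hB.linearIndependent_of_forall_finrank_le (fun v => hx ⟨v, rfl⟩) hyz
  have hW3 : finrank K W = 3 := le_antisymm hW (by simpa using hli.fintype_card_le_finrank)
  set b := basisOfLinearIndependentOfCardEqFinrank hli (by simp [hW3])
  have hb : ⇑b = ![B y z, B x y, B x z] := coe_basisOfLinearIndependentOfCardEqFinrank hli _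
  have hx2 : finrank K (range (B x)) = 2 := le_antisymm (hrank x)
    (b.two_le_finrank_of_mem (j := 1) (k := 2) (by decide) ⟨y, by simp [hb]⟩ ⟨z, by simp [hb]⟩)
  have hx0 : x ≠ 0 := fun h => hli.ne_zero 1 (by simp [h])
  refine ⟨?_, hW3⟩
  rw [← finrank_range_add_finrank_ker (B x), hB.ker_eq_span_singleton hsep hrank hb, hx2,
    finrank_span_singleton hx0]

end LinearMap

namespace IsStep2FGLA

variable {L : Type*} [LieRing L] [LieAlgebra ℝ L] {m1 m2 : Submodule ℝ L}

theorem lie_mem (h : IsStep2FGLA L m1 m2) {x y : L} (hx : x ∈ m1) (hy : y ∈ m1) :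
    ⁅x, y⁆ ∈ m2 :=
  h.span_brackets ▸ subset_span ⟨x, hx, y, hy, rfl⟩

def bracket (h : IsStep2FGLA L m1 m2) : m1 →ₗ[ℝ] m1 →ₗ[ℝ] m2 :=
  LinearMap.mk₂ ℝ (fun x y => ⟨⁅(x : L), (y : L)⁆, h.lie_mem x.2 y.2⟩)
    (fun _ _ _ => Subtype.ext (add_lie _ _ _)) (fun _ _ _ => Subtype.ext (smul_lie _ _ _))
    (fun _ _ _ => Subtype.ext (lie_add _ _ _)) (fun _ _ _ => Subtype.ext (lie_smul _ _ _))

theorem isAlt_bracket (h : IsStep2FGLA L m1 m2) : h.bracket.IsAlt :=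
  fun x => Subtype.ext (lie_self (x : L))

theorem span_bracket_eq_top (h : IsStep2FGLA L m1 m2) :
    span ℝ {w | ∃ x y, h.bracket x y = w} = ⊤ := by
  apply map_injective_of_injective (injective_subtype m2)
  rw [Submodule.map_span, map_subtype_top]
  conv_rhs => rw [h.span_brackets]
  congr 1
  ext z
  constructor
  · rintro ⟨_, ⟨x, y, rfl⟩, rfl⟩
    exact ⟨x, x.2, y, y.2, rfl⟩
  · rintro ⟨x, hx, y, hy, rfl⟩
    exact ⟨_, ⟨⟨x, hx⟩, ⟨y, hy⟩, rfl⟩, rfl⟩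

theorem separatingLeft_bracket (h : IsStep2FGLA L m1 m2)
    (hcenter : ∀ x ∈ m1, (∀ y : L, ⁅x, y⁆ = 0) → x = 0) :
    h.bracket.SeparatingLeft := by
  intro x hx
  refine Subtype.ext (hcenter x x.2 fun y => ?_)
  obtain ⟨y1, hy1, y2, hy2, rfl⟩ := mem_sup.1 (h.compl.sup_eq_top ▸ mem_top : y ∈ m1 ⊔ m2)
  rw [lie_add, h.bracket_m1_m2 x x.2 y2 hy2, add_zero]
  exact congr_arg Subtype.val (hx ⟨y1, hy1⟩)

end IsStep2FGLA

/-- The only non-ad-surjective step 2 fundamental graded Lie algebra with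
`dim 𝔪₋₂ ≤ 3` and `𝔪₋₁ ∩ Z(𝔪) = 0` is the truncated step 2 free Lie algebra with
3 generators: `dim 𝔪₋₁ = dim 𝔪₋₂ = 3` and the bracket induces a linear isomorphism
`Λ²(𝔪₋₁) ≃ 𝔪₋₂`. -/
theorem truncatedFree_of_not_adSurjective (L : Type*) [LieRing L] [LieAlgebra ℝ L]
    [FiniteDimensional ℝ L] (m1 m2 : Submodule ℝ L)
    (h : IsStep2FGLA L m1 m2)
    (hdim3 : Module.finrank ℝ ↥m2 ≤ 3)
    (hcenter : ∀ x ∈ m1, (∀ y : L, ⁅x, y⁆ = 0) → x = 0)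
    (hnot : ¬ ∃ X ∈ m1, ∀ z ∈ m2, ∃ Y ∈ m1, ⁅X, Y⁆ = z) :
    Module.finrank ℝ ↥m1 = 3 ∧ Module.finrank ℝ ↥m2 = 3 ∧
      ∃ e : ↥(⋀[ℝ]^2 ↥m1) ≃ₗ[ℝ] ↥m2,
        ∀ x y : ↥m1,
          ((e ⟨ExteriorAlgebra.ιMulti ℝ 2 ![x, y],
              ExteriorAlgebra.ιMulti_range ℝ 2 (Set.mem_range_self _)⟩ : ↥m2) : L)
            = ⁅(x : L), (y : L)⁆ := by
  have hne_top : ∀ x, range (h.bracket x) ≠ ⊤ := fun x htop => hnot ⟨x, x.2, fun z hz => by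
    obtain ⟨y, hy⟩ := range_eq_top.1 htop ⟨z, hz⟩
    exact ⟨y, y.2, congr_arg Subtype.val hy⟩⟩
  obtain ⟨h1, h2⟩ := h.isAlt_bracket.finrank_eq_three_of_forall_range_ne_top
    (h.separatingLeft_bracket hcenter) h.span_bracket_eq_top hdim3 hne_top
  obtain ⟨e, he⟩ := h.isAlt_bracket.exists_exteriorPower_two_equiv h.span_bracket_eq_top
    (by rw [h1, h2]; rfl)
  exact ⟨h1, h2, e, fun x y => congr_arg Subtype.val (he x y)⟩
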